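/- arXiv:1511.03234 — 3 statements merged into one kernel-verified Lean document; each statement's English description precedes it below -/
import Mathlib

section
/- Let 𝒥 = (M, λ, τ) be a reduction structure possessing an ordered substructure (so 𝒥 is weakly noetherian over every coefficient ring). Then there exists a finite set G ⊆ 𝒯 × M such that for every commutative ring A and every marked set F on 𝒥 over A: F is a marked basis if and only if for every (x^η, x^α) ∈ G and every reduced l with x^η f_α →_* l, one has l = 0. -/
open MvPolynomial

/-- Terms (monomials) in `n` variables, identified with their exponent vectors. -/
abbrev Term (n : ℕ) := Fin n →₀ ℕ

/-- A reduction structure `𝒥 = (M, λ, τ)`. -/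
structure RedStruct (n : ℕ) where
  M : Finset (Term n)
  tau : Term n → Set (Term n)
  lam : Term n → Finset (Term n)
  tau_orderIdeal : ∀ α ∈ M, ∀ η ∈ tau α, ∀ η' : Term n, η' ≤ η → η' ∈ tau α
  cover : ∀ β : Term n, (∃ α ∈ M, ∃ η, β = α + η) ↔ (∃ α ∈ M, ∃ η ∈ tau α, β = α + η)
  lam_tail : ∀ α ∈ M, ∀ γ ∈ lam α, ¬ ∃ η ∈ tau α, γ = α + η

namespace RedStruct

variable {n : ℕ}

/-- The cone of `x^α`. -/
def cone (𝒥 : RedStruct n) (α : Term n) : Set (Term n) := {β | ∃ η ∈ 𝒥.tau α, β = α + η}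

/-- The semigroup ideal `J` generated by `M`. -/
def idealJ (𝒥 : RedStruct n) : Set (Term n) := {β | ∃ α ∈ 𝒥.M, ∃ η, β = α + η}

def hasMaximalCones (𝒥 : RedStruct n) : Prop := ∀ α ∈ 𝒥.M, 𝒥.tau α = Set.univ

def hasDisjointCones (𝒥 : RedStruct n) : Prop :=
  ∀ α ∈ 𝒥.M, ∀ α' ∈ 𝒥.M, α ≠ α' → 𝒥.cone α ∩ 𝒥.cone α' = ∅

/-- `𝒥'` is a substructure of `𝒥`: same `M`, same tails, smaller multiplicative sets. -/
def IsSubstructure (𝒥' 𝒥 : RedStruct n) : Prop :=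
  𝒥'.M = 𝒥.M ∧ 𝒥'.lam = 𝒥.lam ∧ ∀ α ∈ 𝒥.M, 𝒥'.tau α ⊆ 𝒥.tau α

/-- An ordered reduction structure: there are a well-founded strictly (partially) ordered set
`(W, ≺)` and an ordering function `φ` with `φ(x^{γ+η}) ≺ φ(x^{α+η})` for all `x^α ∈ M`,
`x^γ ∈ λ_α`, `x^η ∈ τ_α`. -/
def IsOrdered (𝒥 : RedStruct n) : Prop :=
  ∃ (W : Type) (lt : W → W → Prop) (φ : Term n → W),
    IsStrictOrder W lt ∧ WellFounded lt ∧
      ∀ α ∈ 𝒥.M, ∀ γ ∈ 𝒥.lam α, ∀ η ∈ 𝒥.tau α, lt (φ (γ + η)) (φ (α + η))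

end RedStruct

variable {n : ℕ}

/-- A marked set on `𝒥` over the ring `A`: each `f_α = x^α + Σ_{γ ∈ λ_α} c γ x^γ`. -/
def IsMarkedSet {A : Type*} [CommRing A] (𝒥 : RedStruct n)
    (F : Term n → MvPolynomial (Fin n) A) : Prop :=
  ∀ α ∈ 𝒥.M, MvPolynomial.coeff α (F α) = 1 ∧
    ∀ β : Term n, MvPolynomial.coeff β (F α) ≠ 0 → β = α ∨ β ∈ 𝒥.lam α

/-- One base step of reduction, allowing multipliers from the family `σ`. -/
def RedStep {A : Type*} [CommRing A] (𝒥 : RedStruct n) (σ : Term n → Set (Term n))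
    (F : Term n → MvPolynomial (Fin n) A) (g h : MvPolynomial (Fin n) A) : Prop :=
  ∃ α ∈ 𝒥.M, ∃ η ∈ σ α, MvPolynomial.coeff (α + η) g ≠ 0 ∧
    h = g - MvPolynomial.monomial η (MvPolynomial.coeff (α + η) g) * F α

/-- The reduction relation `→_{F𝒥}`. -/
def Red {A : Type*} [CommRing A] (𝒥 : RedStruct n) (F : Term n → MvPolynomial (Fin n) A) :
    MvPolynomial (Fin n) A → MvPolynomial (Fin n) A → Prop :=
  RedStep 𝒥 𝒥.tau F

/-- The reflexive-transitive closure `→_*` of `→_{F𝒥}`. -/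
def RedStar {A : Type*} [CommRing A] (𝒥 : RedStruct n) (F : Term n → MvPolynomial (Fin n) A) :
    MvPolynomial (Fin n) A → MvPolynomial (Fin n) A → Prop :=
  Relation.ReflTransGen (Red 𝒥 F)

/-- A polynomial is reduced if its support is contained in `N(J)`. -/
def IsReducedPoly {A : Type*} [CommRing A] (𝒥 : RedStruct n)
    (l : MvPolynomial (Fin n) A) : Prop :=
  ∀ β ∈ l.support, β ∉ 𝒥.idealJ

/-- A relation is noetherian: there is no infinite chain of steps. -/
def RelNoetherian {X : Type*} (r : X → X → Prop) : Prop :=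
  ¬ ∃ f : ℕ → X, ∀ i, r (f i) (f (i + 1))

/-- `𝒥` is noetherian over `A`: for every marked set `F` on `𝒥` over `A`, every sequence
of `→_{F𝒥}` reduction steps terminates. -/
def RedStruct.IsNoetherianOver (𝒥 : RedStruct n) (A : Type*) [CommRing A] : Prop :=
  ∀ F : Term n → MvPolynomial (Fin n) A, IsMarkedSet 𝒥 F → RelNoetherian (Red 𝒥 F)

/-- `𝒥` is weakly noetherian over `A`: it has a noetherian substructure. -/
def RedStruct.IsWeaklyNoetherianOver (𝒥 : RedStruct n) (A : Type*) [CommRing A] : Prop :=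
  ∃ 𝒥' : RedStruct n, RedStruct.IsSubstructure 𝒥' 𝒥 ∧ 𝒥'.IsNoetherianOver A

/-- The set `σF = {x^η f_α : x^α ∈ M, x^η ∈ σ_α}`. -/
def tauF {A : Type*} [CommRing A] (𝒥 : RedStruct n) (σ : Term n → Set (Term n))
    (F : Term n → MvPolynomial (Fin n) A) : Set (MvPolynomial (Fin n) A) :=
  {p | ∃ α ∈ 𝒥.M, ∃ η ∈ σ α, p = MvPolynomial.monomial η (1 : A) * F α}

/-- The `A`-submodule `⟨σF⟩` generated by `σF`. -/
noncomputable def tauSpan {A : Type*} [CommRing A] (𝒥 : RedStruct n) (σ : Term n → Set (Term n))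
    (F : Term n → MvPolynomial (Fin n) A) : Submodule A (MvPolynomial (Fin n) A) :=
  Submodule.span A (tauF 𝒥 σ F)

/-- The `A`-submodule `⟨N(J)⟩` spanned by the terms outside `J`. -/
noncomputable def NJSpan (𝒥 : RedStruct n) (A : Type*) [CommRing A] :
    Submodule A (MvPolynomial (Fin n) A) :=
  Submodule.span A {p | ∃ β ∉ 𝒥.idealJ, p = MvPolynomial.monomial β (1 : A)}

/-- `F` is a marked basis: `(F) ⊕ ⟨N(J)⟩ = P` as `A`-modules. -/
def IsMarkedBasis {A : Type*} [CommRing A] (𝒥 : RedStruct n)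
    (F : Term n → MvPolynomial (Fin n) A) : Prop :=
  IsCompl (Submodule.restrictScalars A (Ideal.span (F '' ↑𝒥.M))) (NJSpan 𝒥 A)

/-- A representation of `g` by `σF`: `g = Σ c_(α,η) · x^η f_α` over finitely many
distinct pairs `(α, η)` with `x^α ∈ M`, `x^η ∈ σ_α` and nonzero coefficients. -/
def IsRepr {A : Type*} [CommRing A] (𝒥 : RedStruct n) (σ : Term n → Set (Term n))
    (F : Term n → MvPolynomial (Fin n) A) (c : (Term n × Term n) →₀ A)
    (g : MvPolynomial (Fin n) A) : Prop :=
  (∀ p ∈ c.support, p.1 ∈ 𝒥.M ∧ p.2 ∈ σ p.1) ∧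
    g = c.sum fun p a => MvPolynomial.monomial p.2 a * F p.1

/-- The S-polynomial `S(f_β, f_α) = (lcm(x^α,x^β)/x^α) f_α − (lcm(x^α,x^β)/x^β) f_β`,
written `SPoly F α β`. -/
noncomputable def SPoly {A : Type*} [CommRing A] (F : Term n → MvPolynomial (Fin n) A) (α β : Term n) :
    MvPolynomial (Fin n) A :=
  MvPolynomial.monomial ((α ⊔ β) - α) (1 : A) * F α -
    MvPolynomial.monomial ((α ⊔ β) - β) (1 : A) * F β

/-!
Along the ordered substructure `𝒥'` every reduction step replaces a term `x^{α+η}` of the support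
by tail terms whose `φ`-values are smaller, so the multiset of `φ`-values of the support decreases
in the Dershowitz–Manna order: reduction terminates and every polynomial has a reduced normal form.

Suppose every `x^η f_α` reduces only to `0`. Then every element of `(F)` is an `A`-combination of
products `x^η f_α` with `x^η ∈ τ'_α`. For a reduced such combination, the `φ`-maximal head
`x^{α+η}` lies in `J`, so it cancels against a second product with the same head; their difference
reduces to `0` through terms below that head, which yields a combination with a smaller multiset
of heads. Hence `(F) ∩ ⟨N(J)⟩ = 0`, and normal forms give `(F) + ⟨N(J)⟩ = P`.

The finite set `G` comes from the universal marked set over `ℤ[c(f_α, x^γ)]`: this ring is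
noetherian, so the ideal generated by the coefficients of all reduced reducts of all `x^η f_α` is
generated by those of finitely many pairs. Any marked set is a specialization of the universal
one, and reductions can be lifted along the specialization and continued to a normal form there.
-/

namespace Relation

variable {α : Type*} {r : α → α → Prop}

theorem reflTransGen_cutExpand_of_le {s t : Multiset α} (h : s ≤ t) :
    ReflTransGen (CutExpand r) s t := by
  obtain ⟨u, rfl⟩ := Multiset.le_iff_exists_add.1 h
  induction u using Multiset.induction with
  | empty => rw [add_zero]
  | cons a u ih =>
    refine (ih (Multiset.le_add_right _ _)).tail ⟨0, a, by simp, ?_⟩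
    rw [add_zero, Multiset.add_cons, ← Multiset.singleton_add, add_comm]

theorem transGen_cutExpand_map_of_subset {ι : Type*} [DecidableEq ι] {φ : ι → α}
    {s t v : Finset ι} {i : ι} (hi : i ∈ s) (ht : t ⊆ s.erase i ∪ v)
    (hv : ∀ j ∈ v, r (φ j) (φ i)) :
    TransGen (CutExpand r) (t.val.map φ) (s.val.map φ) := by
  have hle : t.val.map φ ≤ (s.erase i).val.map φ + v.val.map φ := by
    rw [← Multiset.map_add]
    refine Multiset.map_le_map ((Finset.val_le_iff.2 ht).trans ?_)
    rw [Finset.union_val]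
    exact Multiset.union_le_add _ _
  refine TransGen.tail' (reflTransGen_cutExpand_of_le hle) ⟨v.val.map φ, φ i, by simpa using hv, ?_⟩
  rw [add_right_comm, ← Multiset.map_singleton, ← Multiset.map_add, Finset.erase_val,
    Multiset.add_singleton_eq_iff.2 ⟨hi, rfl⟩]

end Relation

theorem Finset.exists_forall_not_rel_image {ι W : Type*} {r : W → W → Prop} [IsStrictOrder W r]
    (f : ι → W) {s : Finset ι} (hs : s.Nonempty) : ∃ i ∈ s, ∀ j ∈ s, ¬ r (f i) (f j) := by
  obtain ⟨⟨i, hi⟩, -, hmin⟩ := (s.wellFoundedOn (r := f ⁻¹'o Function.swap r)).has_min Set.univ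
    ⟨⟨_, hs.choose_spec⟩, trivial⟩
  exact ⟨i, hi, fun j hj => hmin ⟨j, hj⟩ trivial⟩

theorem MvPolynomial.monomial_mul_eq_smul {σ R : Type*} [CommSemiring R] (η : σ →₀ ℕ) (a : R)
    (f : MvPolynomial σ R) : monomial η a * f = a • (monomial η 1 * f) := by
  rw [← smul_mul_assoc, smul_monomial, smul_eq_mul, mul_one]

theorem MvPolynomial.restrictScalars_ideal_span_le {σ R : Type*} [CommRing R]
    {s : Set (MvPolynomial σ R)} {N : Submodule R (MvPolynomial σ R)}
    (h : ∀ η, ∀ f ∈ s, monomial η 1 * f ∈ N) : (Ideal.span s).restrictScalars R ≤ N := by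
  suffices ∀ x ∈ Ideal.span s, ∀ q, q * x ∈ N from fun x hx => by simpa using this x hx 1
  intro x hx
  induction hx using Submodule.span_induction with
  | mem f hf =>
    intro q
    induction q using MvPolynomial.induction_on' with
    | monomial u a =>
      rw [monomial_mul_eq_smul]
      exact N.smul_mem a (h u f hf)
    | add p q hp hq => rw [add_mul]; exact N.add_mem hp hq
  | zero => simp
  | add x y _ _ hx hy => intro q; rw [mul_add]; exact N.add_mem (hx q) (hy q)
  | smul r x _ hx => intro q; rw [smul_eq_mul, ← mul_assoc]; exact hx _

namespace RedStruct

variable {n : ℕ} {W : Type*}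

def IsOrdering (𝒥 : RedStruct n) (lt : W → W → Prop) (φ : Term n → W) : Prop :=
  ∀ α ∈ 𝒥.M, ∀ γ ∈ 𝒥.lam α, ∀ η ∈ 𝒥.tau α, lt (φ (γ + η)) (φ (α + η))

end RedStruct

def ReducesOnlyToZero {n : ℕ} {A : Type*} [CommRing A] (𝒥 : RedStruct n)
    (F : Term n → MvPolynomial (Fin n) A) (g : MvPolynomial (Fin n) A) : Prop :=
  ∀ l, IsReducedPoly 𝒥 l → RedStar 𝒥 F g l → l = 0

section Reduction

variable {n : ℕ} {A : Type*} [CommRing A] {𝒥 : RedStruct n} {F : Term n → MvPolynomial (Fin n) A}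

theorem exists_redStar_isReducedPoly (hwf : WellFounded (flip (Red 𝒥 F)))
    (g : MvPolynomial (Fin n) A) : ∃ l, RedStar 𝒥 F g l ∧ IsReducedPoly 𝒥 l := by
  induction g using hwf.induction with
  | _ g ih =>
    by_cases hg : IsReducedPoly 𝒥 g
    · exact ⟨g, .refl, hg⟩
    obtain ⟨v, hv, hvJ⟩ : ∃ v ∈ g.support, v ∈ 𝒥.idealJ := by
      simpa [IsReducedPoly] using hg
    obtain ⟨α, hα, η, hη, rfl⟩ := (𝒥.cover v).1 hvJ
    have hstep : Red 𝒥 F g (g - monomial η (coeff (α + η) g) * F α) :=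
      ⟨α, hα, η, hη, mem_support_iff.1 hv, rfl⟩
    obtain ⟨l, hl, hlred⟩ := ih _ hstep
    exact ⟨l, .head hstep hl, hlred⟩

namespace IsMarkedSet

variable (hF : IsMarkedSet 𝒥 F) {α : Term n} (hα : α ∈ 𝒥.M)
include hF hα

theorem coeff_add_monomial_mul (η : Term n) (a : A) : coeff (α + η) (monomial η a * F α) = a := by
  rw [add_comm, coeff_monomial_mul, (hF α hα).1, mul_one]

theorem eq_or_mem_lam_of_coeff_ne_zero {v η : Term n} {a : A}
    (h : coeff v (monomial η a * F α) ≠ 0) : v = α + η ∨ ∃ γ ∈ 𝒥.lam α, v = γ + η := by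
  rw [coeff_monomial_mul'] at h
  split_ifs at h with hηv
  · obtain ⟨w, rfl⟩ := exists_add_of_le hηv
    rw [add_tsub_cancel_left] at h
    rcases (hF α hα).2 w (right_ne_zero_of_mul h) with rfl | hw
    · exact .inl (add_comm _ _)
    · exact .inr ⟨w, hw, add_comm _ _⟩
  · exact absurd rfl h

theorem support_sub_subset (g : MvPolynomial (Fin n) A) (η : Term n) :
    (g - monomial η (coeff (α + η) g) * F α).support ⊆
      g.support.erase (α + η) ∪ (𝒥.lam α).image (· + η) := by
  intro v hv
  rw [mem_support_iff, coeff_sub] at hv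
  have hvt : v ≠ α + η := by
    rintro rfl
    exact hv (by rw [hF.coeff_add_monomial_mul hα, sub_self])
  by_cases hvg : coeff v g = 0
  · rw [hvg, zero_sub, neg_ne_zero] at hv
    rcases hF.eq_or_mem_lam_of_coeff_ne_zero hα hv with h | ⟨γ, hγ, rfl⟩
    · exact absurd h hvt
    · exact Finset.mem_union_right _ (Finset.mem_image_of_mem _ hγ)
  · exact Finset.mem_union_left _ (Finset.mem_erase.2 ⟨hvt, mem_support_iff.2 hvg⟩)

end IsMarkedSet

theorem IsMarkedSet.wellFounded_red {W : Type*} {lt : W → W → Prop} {φ : Term n → W}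
    (hF : IsMarkedSet 𝒥 F) (hwf : WellFounded lt) (hφ : 𝒥.IsOrdering lt φ) :
    WellFounded (flip (Red 𝒥 F)) := by
  classical
  refine Subrelation.wf ?_ (InvImage.wf (fun g => g.support.val.map φ) hwf.cutExpand.transGen)
  rintro h g ⟨α, hα, η, hη, hc, rfl⟩
  refine Relation.transGen_cutExpand_map_of_subset (mem_support_iff.2 hc)
    (hF.support_sub_subset hα g η) ?_
  simp only [Finset.mem_image]
  rintro _ ⟨γ, hγ, rfl⟩
  exact hφ α hα γ hγ η hη

end Reduction

section TauSpan

variable {n : ℕ} {A : Type*} [CommRing A] {𝒥 : RedStruct n} {F : Term n → MvPolynomial (Fin n) A}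

def tauPairs (𝒥 : RedStruct n) (σ : Term n → Set (Term n)) : Set (Term n × Term n) :=
  {p | p.2 ∈ 𝒥.M ∧ p.1 ∈ σ p.2}

noncomputable def termMul (F : Term n → MvPolynomial (Fin n) A) (p : Term n × Term n) :
    MvPolynomial (Fin n) A :=
  monomial p.1 1 * F p.2

theorem tauF_eq_image (σ : Term n → Set (Term n)) : tauF 𝒥 σ F = termMul F '' tauPairs 𝒥 σ := by
  ext g
  constructor
  · rintro ⟨α, hα, η, hη, rfl⟩
    exact ⟨(η, α), ⟨hα, hη⟩, rfl⟩
  · rintro ⟨⟨η, α⟩, ⟨hα, hη⟩, rfl⟩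
    exact ⟨α, hα, η, hη, rfl⟩

theorem mem_tauSpan_iff {σ : Term n → Set (Term n)} {g : MvPolynomial (Fin n) A} :
    g ∈ tauSpan 𝒥 σ F ↔
      ∃ c ∈ Finsupp.supported A A (tauPairs 𝒥 σ),
        Finsupp.linearCombination A (termMul F) c = g := by
  rw [tauSpan, tauF_eq_image, Finsupp.mem_span_image_iff_linearCombination]

theorem tauSpan_mono {σ σ' : Term n → Set (Term n)} (h : ∀ α, σ α ⊆ σ' α) :
    tauSpan 𝒥 σ F ≤ tauSpan 𝒥 σ' F :=
  Submodule.span_mono fun _ ⟨α, hα, η, hη, hg⟩ => ⟨α, hα, η, h α hη, hg⟩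

theorem tauSpan_le_ideal (σ : Term n → Set (Term n)) :
    tauSpan 𝒥 σ F ≤ (Ideal.span (F '' 𝒥.M)).restrictScalars A :=
  Submodule.span_le.2 fun _ ⟨α, hα, _, _, hg⟩ =>
    hg ▸ Ideal.mul_mem_left _ _ (Ideal.subset_span ⟨α, hα, rfl⟩)

theorem IsMarkedSet.sub_mem_tauSpan_of_redStar (hF : IsMarkedSet 𝒥 F) {S : Set (Term n)}
    (hS : ∀ α ∈ 𝒥.M, ∀ η ∈ 𝒥.tau α, α + η ∈ S → ∀ γ ∈ 𝒥.lam α, γ + η ∈ S)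
    {g l : MvPolynomial (Fin n) A} (hgl : RedStar 𝒥 F g l) (hg : ↑g.support ⊆ S) :
    g - l ∈ tauSpan 𝒥 (fun α => {η | η ∈ 𝒥.tau α ∧ α + η ∈ S}) F := by
  induction hgl using Relation.ReflTransGen.head_induction_on with
  | refl => simp
  | head hstep _ ih =>
    obtain ⟨α, hα, η, hη, hc, rfl⟩ := hstep
    rename_i g _
    have hαη : α + η ∈ S := hg (mem_support_iff.2 hc)
    have hh : ↑(g - monomial η (coeff (α + η) g) * F α).support ⊆ S := by
      intro v hv
      rcases Finset.mem_union.1 (hF.support_sub_subset hα g η hv) with hv | hv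
      · exact hg (Finset.mem_of_mem_erase hv)
      · obtain ⟨γ, hγ, rfl⟩ := Finset.mem_image.1 hv
        exact hS α hα η hη hαη γ hγ
    have := Submodule.add_mem _ (ih hh)
      (Submodule.smul_mem _ (coeff (α + η) g) (Submodule.subset_span ⟨α, hα, η, ⟨hη, hαη⟩, rfl⟩))
    rwa [← monomial_mul_eq_smul, sub_right_comm, sub_add_cancel] at this

theorem IsMarkedSet.sub_mem_tauSpan_tau_of_redStar (hF : IsMarkedSet 𝒥 F)
    {g l : MvPolynomial (Fin n) A} (hgl : RedStar 𝒥 F g l) : g - l ∈ tauSpan 𝒥 𝒥.tau F :=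
  tauSpan_mono (fun _ _ hη => hη.1)
    (hF.sub_mem_tauSpan_of_redStar (S := Set.univ) (by simp) hgl (Set.subset_univ _))

theorem NJSpan_eq_restrictSupport (𝒥 : RedStruct n) (A : Type*) [CommRing A] :
    NJSpan 𝒥 A = restrictSupport A 𝒥.idealJᶜ := by
  rw [restrictSupport_eq_span, NJSpan]
  congr 1
  ext p
  simp [eq_comm]

theorem mem_NJSpan_iff {l : MvPolynomial (Fin n) A} : l ∈ NJSpan 𝒥 A ↔ IsReducedPoly 𝒥 l := by
  rw [NJSpan_eq_restrictSupport, mem_restrictSupport_iff]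
  rfl

end TauSpan

section MarkedBasis

variable {n : ℕ} {A : Type*} [CommRing A] {𝒥 : RedStruct n} {F : Term n → MvPolynomial (Fin n) A}
  {W : Type*} {lt : W → W → Prop} {φ : Term n → W}

theorem IsMarkedSet.lt_of_coeff_termMul_ne_zero (hF : IsMarkedSet 𝒥 F) (hφ : 𝒥.IsOrdering lt φ)
    {p : Term n × Term n} (hp : p ∈ tauPairs 𝒥 𝒥.tau) {v : Term n}
    (hv : coeff v (termMul F p) ≠ 0) (hvp : v ≠ p.2 + p.1) : lt (φ v) (φ (p.2 + p.1)) := by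
  rcases hF.eq_or_mem_lam_of_coeff_ne_zero hp.1 hv with h | ⟨γ, hγ, rfl⟩
  · exact absurd h hvp
  · exact hφ _ hp.1 γ hγ _ hp.2

theorem IsMarkedSet.exists_ne_head_eq (hF : IsMarkedSet 𝒥 F) (hφ : 𝒥.IsOrdering lt φ)
    {c : (Term n × Term n) →₀ A} (hc : c ∈ Finsupp.supported A A (tauPairs 𝒥 𝒥.tau))
    (hred : IsReducedPoly 𝒥 (Finsupp.linearCombination A (termMul F) c))
    {p₀ : Term n × Term n} (hp₀ : p₀ ∈ c.support)
    (hmax : ∀ p ∈ c.support, ¬ lt (φ (p₀.2 + p₀.1)) (φ (p.2 + p.1))) :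
    ∃ p₁ ∈ c.support, p₁ ≠ p₀ ∧ p₁.2 + p₁.1 = p₀.2 + p₀.1 := by
  by_contra! hne
  have hcoeff : coeff (p₀.2 + p₀.1) (Finsupp.linearCombination A (termMul F) c) = c p₀ := by
    rw [Finsupp.linearCombination_apply, Finsupp.sum, coeff_sum, Finset.sum_eq_single p₀]
    · rw [coeff_smul, termMul, hF.coeff_add_monomial_mul (hc hp₀).1, smul_eq_mul, mul_one]
    · intro p hp hpp₀
      rw [coeff_smul, smul_eq_mul, mul_eq_zero_of_right]
      by_contra h
      exact hmax p hp (hF.lt_of_coeff_termMul_ne_zero hφ (hc hp) h (hne p hp hpp₀).symm)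
    · exact fun h => absurd hp₀ h
  refine Finsupp.mem_support_iff.1 hp₀ (hcoeff ▸ notMem_support_iff.1 fun h => hred _ h ?_)
  exact ⟨p₀.2, (hc hp₀).1, p₀.1, rfl⟩

theorem IsMarkedSet.termMul_sub_mem_tauSpan [Nontrivial A] [IsTrans W lt] (hF : IsMarkedSet 𝒥 F)
    (hφ : 𝒥.IsOrdering lt φ) (hwf : WellFounded (flip (Red 𝒥 F)))
    {p₀ p₁ : Term n × Term n} (hp₀ : p₀ ∈ tauPairs 𝒥 𝒥.tau) (hp₁ : p₁ ∈ tauPairs 𝒥 𝒥.tau)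
    (hhead : p₁.2 + p₁.1 = p₀.2 + p₀.1) (h₀ : ReducesOnlyToZero 𝒥 F (termMul F p₀)) :
    termMul F p₀ - termMul F p₁ ∈
      tauSpan 𝒥 (fun α => {η | η ∈ 𝒥.tau α ∧ lt (φ (α + η)) (φ (p₀.2 + p₀.1))}) F := by
  set t := p₀.2 + p₀.1
  have hcoeff₀ : coeff t (termMul F p₀) = 1 := hF.coeff_add_monomial_mul hp₀.1 _ _
  have hcoeff₁ : coeff t (termMul F p₁) = 1 := hhead ▸ hF.coeff_add_monomial_mul hp₁.1 _ _
  have hstep : Red 𝒥 F (termMul F p₀) (termMul F p₀ - termMul F p₁) :=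
    ⟨p₁.2, hp₁.1, p₁.1, hp₁.2, by rw [hhead, hcoeff₀]; exact one_ne_zero,
      by rw [hhead, hcoeff₀]; rfl⟩
  have hsupp : ↑(termMul F p₀ - termMul F p₁).support ⊆ {v | lt (φ v) (φ t)} := by
    intro v hv
    rw [Finset.mem_coe, mem_support_iff, coeff_sub] at hv
    have hvt : v ≠ t := by rintro rfl; exact hv (by rw [hcoeff₀, hcoeff₁, sub_self])
    by_cases h₀ : coeff v (termMul F p₀) = 0
    · rw [h₀, zero_sub, neg_ne_zero] at hv
      exact hhead ▸ hF.lt_of_coeff_termMul_ne_zero hφ hp₁ hv (hhead ▸ hvt)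
    · exact hF.lt_of_coeff_termMul_ne_zero hφ hp₀ h₀ hvt
  obtain ⟨l, hl, hlred⟩ := exists_redStar_isReducedPoly hwf (termMul F p₀ - termMul F p₁)
  have hl0 : l = 0 := h₀ l hlred (.head hstep hl)
  have hS : ∀ α ∈ 𝒥.M, ∀ η ∈ 𝒥.tau α, α + η ∈ {v | lt (φ v) (φ t)} →
      ∀ γ ∈ 𝒥.lam α, γ + η ∈ {v | lt (φ v) (φ t)} :=
    fun α hα η hη hαη γ hγ => _root_.trans (hφ α hα γ hγ η hη) hαη
  simpa [hl0] using hF.sub_mem_tauSpan_of_redStar hS hl hsupp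

theorem IsMarkedSet.eq_zero_of_mem_tauSpan [IsStrictOrder W lt] (hF : IsMarkedSet 𝒥 F)
    (hwf : WellFounded lt) (hφ : 𝒥.IsOrdering lt φ)
    (hall : ∀ p ∈ tauPairs 𝒥 𝒥.tau, ReducesOnlyToZero 𝒥 F (termMul F p))
    {g : MvPolynomial (Fin n) A} (hg : g ∈ tauSpan 𝒥 𝒥.tau F) (hred : IsReducedPoly 𝒥 g) :
    g = 0 := by
  classical
  nontriviality A
  obtain ⟨c, hc, rfl⟩ := mem_tauSpan_iff.1 hg
  clear hg
  induction c using (InvImage.wf (fun c : (Term n × Term n) →₀ A =>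
      c.support.val.map fun p => φ (p.2 + p.1)) hwf.cutExpand.transGen).induction with
  | _ c ih =>
  rcases c.support.eq_empty_or_nonempty with h0 | hne
  · simp [Finsupp.support_eq_empty.1 h0]
  obtain ⟨p₀, hp₀, hmax⟩ :=
    Finset.exists_forall_not_rel_image (r := lt) (fun p => φ (p.2 + p.1)) hne
  obtain ⟨p₁, hp₁, hp₁₀, hhead⟩ := hF.exists_ne_head_eq hφ hc hred hp₀ hmax
  obtain ⟨d, hd, hdD⟩ := mem_tauSpan_iff.1 <| hF.termMul_sub_mem_tauSpan hφ
    (hF.wellFounded_red hwf hφ) (hc hp₀) (hc hp₁) hhead (hall p₀ (hc hp₀))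
  set c' := c + c p₀ • (Finsupp.single p₁ 1 - Finsupp.single p₀ 1 + d)
  have hlc : Finsupp.linearCombination A (termMul F) c' =
      Finsupp.linearCombination A (termMul F) c := by
    simp [c', hdD, - smul_add]
  have hsupp : c'.support ⊆ c.support.erase p₀ ∪ d.support := by
    intro p hp
    by_cases hpd : p ∈ d.support
    · exact Finset.mem_union_right _ hpd
    rw [Finsupp.notMem_support_iff] at hpd
    have hpp₀ : p ≠ p₀ := by
      rintro rfl
      simp [c', hpd, hp₁₀] at hp
    refine Finset.mem_union_left _ (Finset.mem_erase.2 ⟨hpp₀, ?_⟩)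
    by_cases hp1 : p = p₁
    · exact hp1 ▸ hp₁
    by_contra hpc
    simp [c', hpd, Ne.symm hp1, Ne.symm hpp₀,
      Finsupp.notMem_support_iff.1 hpc] at hp
  have hc' : c' ∈ Finsupp.supported A A (tauPairs 𝒥 𝒥.tau) := by
    refine Submodule.add_mem _ hc (Submodule.smul_mem _ _ (Submodule.add_mem _
      (Submodule.sub_mem _ (Finsupp.single_mem_supported A _ (hc hp₁))
        (Finsupp.single_mem_supported A _ (hc hp₀))) ?_))
    refine Finsupp.supported_mono ?_ hd
    exact fun p hp => ⟨hp.1, hp.2.1⟩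
  rw [← hlc]
  exact ih c' (Relation.transGen_cutExpand_map_of_subset hp₀ hsupp fun p hp => (hd hp).2.2) hc'
    (hlc ▸ hred)

theorem IsMarkedSet.isMarkedBasis_of_isOrdered (hF : IsMarkedSet 𝒥 F) (h𝒥 : 𝒥.IsOrdered)
    (hall : ∀ η, ∀ α ∈ 𝒥.M, ReducesOnlyToZero 𝒥 F (monomial η 1 * F α)) :
    IsMarkedBasis 𝒥 F := by
  obtain ⟨W, lt, φ, hso, hwf, hφ⟩ := h𝒥
  have hnf := exists_redStar_isReducedPoly (hF.wellFounded_red hwf hφ)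
  have hideal : (Ideal.span (F '' 𝒥.M)).restrictScalars A ≤ tauSpan 𝒥 𝒥.tau F := by
    refine restrictScalars_ideal_span_le ?_
    rintro η _ ⟨α, hα, rfl⟩
    obtain ⟨l, hfl, hl⟩ := hnf (monomial η 1 * F α)
    simpa [hall η α hα l hl hfl] using hF.sub_mem_tauSpan_tau_of_redStar hfl
  constructor
  · rw [Submodule.disjoint_def]
    intro g hgI hgN
    exact hF.eq_zero_of_mem_tauSpan hwf hφ (fun p hp => hall p.1 p.2 hp.1) (hideal hgI)
      (mem_NJSpan_iff.1 hgN)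
  · rw [codisjoint_iff, Submodule.eq_top_iff']
    intro g
    obtain ⟨l, hgl, hl⟩ := hnf g
    exact Submodule.mem_sup.2 ⟨g - l, tauSpan_le_ideal _ (hF.sub_mem_tauSpan_tau_of_redStar hgl),
      l, mem_NJSpan_iff.2 hl, sub_add_cancel g l⟩

theorem IsMarkedBasis.reducesOnlyToZero (hB : IsMarkedBasis 𝒥 F) (hF : IsMarkedSet 𝒥 F)
    (η : Term n) {α : Term n} (hα : α ∈ 𝒥.M) : ReducesOnlyToZero 𝒥 F (monomial η 1 * F α) := by
  intro l hl hfl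
  have hf : monomial η 1 * F α ∈ Ideal.span (F '' 𝒥.M) :=
    Ideal.mul_mem_left _ _ (Ideal.subset_span ⟨α, hα, rfl⟩)
  have hlI : l ∈ Ideal.span (F '' 𝒥.M) := by
    simpa using Ideal.sub_mem _ hf (tauSpan_le_ideal _ (hF.sub_mem_tauSpan_tau_of_redStar hfl))
  exact Submodule.disjoint_def.1 hB.disjoint l hlI (mem_NJSpan_iff.2 hl)

end MarkedBasis

namespace RedStruct.IsSubstructure

variable {n : ℕ} {A : Type*} [CommRing A] {𝒥 𝒥' : RedStruct n}
  {F : Term n → MvPolynomial (Fin n) A} (hsub : 𝒥'.IsSubstructure 𝒥)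
include hsub

theorem idealJ_eq : 𝒥'.idealJ = 𝒥.idealJ := by
  simp only [idealJ, hsub.1]

theorem isMarkedSet_iff : IsMarkedSet 𝒥' F ↔ IsMarkedSet 𝒥 F := by
  simp only [IsMarkedSet, hsub.1, hsub.2.1]

theorem isReducedPoly_iff {l : MvPolynomial (Fin n) A} :
    IsReducedPoly 𝒥' l ↔ IsReducedPoly 𝒥 l := by
  simp only [IsReducedPoly, hsub.idealJ_eq]

theorem isMarkedBasis_iff : IsMarkedBasis 𝒥' F ↔ IsMarkedBasis 𝒥 F := by
  simp only [IsMarkedBasis, NJSpan, hsub.idealJ_eq, hsub.1]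

theorem redStar {g l : MvPolynomial (Fin n) A} (h : RedStar 𝒥' F g l) : RedStar 𝒥 F g l :=
  Relation.ReflTransGen.mono (fun _ _ ⟨α, hα, η, hη, hc, hh⟩ =>
    ⟨α, hsub.1 ▸ hα, η, hsub.2.2 α (hsub.1 ▸ hα) hη, hc, hh⟩) _ _ h

theorem exists_redStar_isReducedPoly (h𝒥' : 𝒥'.IsOrdered) (hF : IsMarkedSet 𝒥 F)
    (g : MvPolynomial (Fin n) A) : ∃ l, RedStar 𝒥 F g l ∧ IsReducedPoly 𝒥 l := by
  obtain ⟨W, lt, φ, -, hwf, hφ⟩ := h𝒥'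
  obtain ⟨l, hgl, hl⟩ :=
    _root_.exists_redStar_isReducedPoly ((hsub.isMarkedSet_iff.2 hF).wellFounded_red hwf hφ) g
  exact ⟨l, hsub.redStar hgl, hsub.isReducedPoly_iff.1 hl⟩

theorem isMarkedBasis (h𝒥' : 𝒥'.IsOrdered) (hF : IsMarkedSet 𝒥 F)
    (hall : ∀ η, ∀ α ∈ 𝒥.M, ReducesOnlyToZero 𝒥 F (monomial η 1 * F α)) :
    IsMarkedBasis 𝒥 F := by
  refine hsub.isMarkedBasis_iff.1 ((hsub.isMarkedSet_iff.2 hF).isMarkedBasis_of_isOrdered h𝒥' ?_)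
  intro η α hα l hl hfl
  exact hall η α (hsub.1 ▸ hα) l (hsub.isReducedPoly_iff.1 hl) (hsub.redStar hfl)

end RedStruct.IsSubstructure

section Specialization

variable {n : ℕ} {𝒥 : RedStruct n} {R A : Type*} [CommRing R] [CommRing A] {ψ : R →+* A}
  {G : Term n → MvPolynomial (Fin n) R} {F : Term n → MvPolynomial (Fin n) A}

theorem map_sub_monomial_coeff_mul (hGF : ∀ α ∈ 𝒥.M, map ψ (G α) = F α) {α : Term n} (hα : α ∈ 𝒥.M)
    (g : MvPolynomial (Fin n) R) (η : Term n) :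
    map ψ (g - monomial η (coeff (α + η) g) * G α) =
      map ψ g - monomial η (coeff (α + η) (map ψ g)) * F α := by
  rw [map_sub, map_mul, map_monomial, hGF α hα, coeff_map]

theorem RedStar.map (hGF : ∀ α ∈ 𝒥.M, MvPolynomial.map ψ (G α) = F α) {g h : MvPolynomial (Fin n) R}
    (hgh : RedStar 𝒥 G g h) : RedStar 𝒥 F (MvPolynomial.map ψ g) (MvPolynomial.map ψ h) := by
  induction hgh with
  | refl => exact .refl
  | tail _ hstep ih =>
    obtain ⟨α, hα, η, hη, -, rfl⟩ := hstep
    rw [map_sub_monomial_coeff_mul hGF hα]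
    rename_i g' _
    by_cases hc : coeff (α + η) (MvPolynomial.map ψ g') = 0
    · rwa [hc, monomial_zero, zero_mul, sub_zero]
    · exact ih.tail ⟨α, hα, η, hη, hc, rfl⟩

theorem RedStar.exists_lift (hGF : ∀ α ∈ 𝒥.M, MvPolynomial.map ψ (G α) = F α)
    {g : MvPolynomial (Fin n) R}
    {l : MvPolynomial (Fin n) A} (hgl : RedStar 𝒥 F (MvPolynomial.map ψ g) l) :
    ∃ l', RedStar 𝒥 G g l' ∧ MvPolynomial.map ψ l' = l := by
  generalize hg : MvPolynomial.map ψ g = g₀ at hgl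
  induction hgl using Relation.ReflTransGen.head_induction_on generalizing g with
  | refl => exact ⟨g, .refl, hg⟩
  | head hstep _ ih =>
    obtain ⟨α, hα, η, hη, hc, rfl⟩ := hstep
    subst hg
    obtain ⟨l', hl', hmap⟩ := ih (map_sub_monomial_coeff_mul hGF hα g η)
    refine ⟨l', .head ⟨α, hα, η, hη, fun h => hc ?_, rfl⟩ hl', hmap⟩
    rw [coeff_map, h, map_zero]

theorem RedStar.map_eq_of_isReducedPoly (hGF : ∀ α ∈ 𝒥.M, MvPolynomial.map ψ (G α) = F α)
    {g h : MvPolynomial (Fin n) R} (hgh : RedStar 𝒥 G g h)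
    (hg : IsReducedPoly 𝒥 (MvPolynomial.map ψ g)) :
    MvPolynomial.map ψ h = MvPolynomial.map ψ g := by
  induction hgh with
  | refl => rfl
  | tail _ hstep ih =>
    obtain ⟨α, hα, η, -, -, rfl⟩ := hstep
    have hc : coeff (α + η) (MvPolynomial.map ψ g) = 0 :=
      notMem_support_iff.1 fun h => hg _ h ⟨α, hα, η, rfl⟩
    rw [map_sub_monomial_coeff_mul hGF hα, ih, hc, monomial_zero, zero_mul, sub_zero]

end Specialization

namespace RedStruct

variable {n : ℕ} (𝒥 : RedStruct n)

def univIndex : Finset (Term n × Term n) := 𝒥.M ×ˢ 𝒥.M.biUnion 𝒥.lam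

/-- The coefficient ring of the universal marked set: the unknown tail coefficients `c(f_α, x^γ)`
are indeterminates over `ℤ`. -/
abbrev UnivRing : Type := MvPolynomial 𝒥.univIndex ℤ

noncomputable def univCoeff (α γ : Term n) : 𝒥.UnivRing :=
  if h : (α, γ) ∈ 𝒥.univIndex then X ⟨(α, γ), h⟩ else 0

noncomputable def univMarked (α : Term n) : MvPolynomial (Fin n) 𝒥.UnivRing :=
  monomial α 1 + ∑ γ ∈ (𝒥.lam α).erase α, monomial γ (𝒥.univCoeff α γ)

theorem coeff_univMarked (α v : Term n) :
    coeff v (𝒥.univMarked α) = if v = α then 1 else if v ∈ 𝒥.lam α then 𝒥.univCoeff α v else 0 := by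
  classical
  simp only [univMarked, coeff_add, coeff_sum, coeff_monomial]
  split_ifs <;> simp_all [eq_comm]

theorem isMarkedSet_univMarked : IsMarkedSet 𝒥 𝒥.univMarked := by
  refine fun α _ => ⟨by simp [coeff_univMarked], fun β hβ => ?_⟩
  rw [coeff_univMarked] at hβ
  split_ifs at hβ with h₁ h₂
  exacts [.inl h₁, .inr h₂, absurd rfl hβ]

variable {𝒥} {A : Type*} [CommRing A]

noncomputable def specialization (F : Term n → MvPolynomial (Fin n) A) : 𝒥.UnivRing →+* A :=
  eval₂Hom (Int.castRingHom A) fun i => coeff i.1.2 (F i.1.1)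

theorem map_specialization_univMarked {F : Term n → MvPolynomial (Fin n) A} (hF : IsMarkedSet 𝒥 F)
    {α : Term n} (hα : α ∈ 𝒥.M) : map (specialization F) (𝒥.univMarked α) = F α := by
  ext v
  rw [coeff_map, coeff_univMarked]
  split_ifs with h₁ h₂
  · rw [h₁, map_one, (hF α hα).1]
  · have hmem : (α, v) ∈ 𝒥.univIndex :=
      Finset.mem_product.2 ⟨hα, Finset.mem_biUnion.2 ⟨α, hα, h₂⟩⟩
    simp [univCoeff, hmem, specialization]
  · rw [map_zero, eq_comm]
    by_contra h
    rcases (hF α hα).2 v h with h | h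
    exacts [h₁ h, h₂ h]

noncomputable def reductCoeffIdeal (𝒥 : RedStruct n) (p : Term n × Term n) : Ideal 𝒥.UnivRing :=
  Ideal.span {a | ∃ l, IsReducedPoly 𝒥 l ∧
    RedStar 𝒥 𝒥.univMarked (monomial p.1 1 * 𝒥.univMarked p.2) l ∧ ∃ v, coeff v l = a}

theorem reductCoeffIdeal_le_ker {F : Term n → MvPolynomial (Fin n) A} (hF : IsMarkedSet 𝒥 F)
    {p : Term n × Term n} (hp : p.2 ∈ 𝒥.M)
    (h : ReducesOnlyToZero 𝒥 F (monomial p.1 1 * F p.2)) :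
    𝒥.reductCoeffIdeal p ≤ RingHom.ker (specialization F) := by
  have hGF : ∀ α ∈ 𝒥.M, map (specialization F) (𝒥.univMarked α) = F α :=
    fun α hα => map_specialization_univMarked hF hα
  refine Ideal.span_le.2 ?_
  rintro _ ⟨l, hl, hgl, v, rfl⟩
  have hmap := hgl.map hGF
  rw [map_mul, map_monomial, map_one, hGF _ hp] at hmap
  have hl0 := h _ (fun v hv => hl v (support_map_subset _ _ hv)) hmap
  rw [SetLike.mem_coe, RingHom.mem_ker, ← coeff_map, hl0, coeff_zero]

theorem reducesOnlyToZero_of_reductCoeffIdeal_le_ker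
    (hnf : ∀ g, ∃ l, RedStar 𝒥 𝒥.univMarked g l ∧ IsReducedPoly 𝒥 l)
    {F : Term n → MvPolynomial (Fin n) A} (hF : IsMarkedSet 𝒥 F) {p : Term n × Term n}
    (hp : p.2 ∈ 𝒥.M) (h : 𝒥.reductCoeffIdeal p ≤ RingHom.ker (specialization F)) :
    ReducesOnlyToZero 𝒥 F (monomial p.1 1 * F p.2) := by
  have hGF : ∀ α ∈ 𝒥.M, map (specialization F) (𝒥.univMarked α) = F α :=
    fun α hα => map_specialization_univMarked hF hα
  intro l hl hfl
  rw [← hGF _ hp, ← map_one (specialization F), ← map_monomial, ← map_mul] at hfl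
  obtain ⟨l₁, hfl₁, rfl⟩ := hfl.exists_lift hGF
  obtain ⟨l₂, hl₁₂, hl₂⟩ := hnf l₁
  rw [← hl₁₂.map_eq_of_isReducedPoly hGF hl]
  ext v
  rw [coeff_map, coeff_zero]
  exact h (Ideal.subset_span ⟨l₂, hl₂, hfl₁.trans hl₁₂, v, rfl⟩)

universe u

theorem exists_finset_reducesOnlyToZero
    (hnf : ∀ g, ∃ l, RedStar 𝒥 𝒥.univMarked g l ∧ IsReducedPoly 𝒥 l) :
    ∃ G : Finset (Term n × Term n), (∀ p ∈ G, p.2 ∈ 𝒥.M) ∧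
      ∀ (A : Type u) [CommRing A] (F : Term n → MvPolynomial (Fin n) A), IsMarkedSet 𝒥 F →
        (∀ p ∈ G, ReducesOnlyToZero 𝒥 F (monomial p.1 1 * F p.2)) →
          ∀ p : Term n × Term n, p.2 ∈ 𝒥.M → ReducesOnlyToZero 𝒥 F (monomial p.1 1 * F p.2) := by
  let I : {p : Term n × Term n // p.2 ∈ 𝒥.M} → Ideal 𝒥.UnivRing := fun p => 𝒥.reductCoeffIdeal p
  obtain ⟨s, hs⟩ := CompleteLattice.IsCompactElement.exists_finset_of_le_iSup _
    ((Submodule.fg_iff_compact _).1 (IsNoetherian.noetherian (⨆ p, I p))) I le_rfl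
  refine ⟨s.map (Function.Embedding.subtype _), by simp +contextual, fun A _ F hF hG p hp => ?_⟩
  refine reducesOnlyToZero_of_reductCoeffIdeal_le_ker hnf hF hp ?_
  calc 𝒥.reductCoeffIdeal p = I ⟨p, hp⟩ := rfl
    _ ≤ ⨆ q, I q := le_iSup I _
    _ ≤ ⨆ q ∈ s, I q := hs
    _ ≤ RingHom.ker (specialization F) := iSup₂_le fun q hq =>
      reductCoeffIdeal_le_ker hF q.2 (hG q (Finset.mem_map_of_mem _ hq))

end RedStruct

/-- if `𝒥` has an ordered substructure, then there is a finite set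
`G ⊆ 𝒯 × M` such that, for every commutative ring `A` and every marked set `F` on `𝒥`
over `A`, `F` is a marked basis iff for all `(x^η, x^α) ∈ G` all complete reductions of
`x^η f_α` end in `0`. -/
theorem stmt13 {n : ℕ} (𝒥 : RedStruct n)
    (h : ∃ 𝒥' : RedStruct n, RedStruct.IsSubstructure 𝒥' 𝒥 ∧ 𝒥'.IsOrdered) :
    ∃ G : Finset (Term n × Term n), (∀ p ∈ G, p.2 ∈ 𝒥.M) ∧
      ∀ (A : Type) [CommRing A], ∀ F : Term n → MvPolynomial (Fin n) A,
        IsMarkedSet 𝒥 F →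
          (IsMarkedBasis 𝒥 F ↔
            ∀ p ∈ G, ∀ l : MvPolynomial (Fin n) A, IsReducedPoly 𝒥 l →
              RedStar 𝒥 F (MvPolynomial.monomial p.1 (1 : A) * F p.2) l → l = 0) := by
  obtain ⟨𝒥', hsub, h𝒥'⟩ := h
  obtain ⟨G, hGM, hG⟩ := 𝒥.exists_finset_reducesOnlyToZero
    (hsub.exists_redStar_isReducedPoly h𝒥' 𝒥.isMarkedSet_univMarked)
  refine ⟨G, hGM, fun A _ F hF => ⟨fun hB p hp => hB.reducesOnlyToZero hF p.1 (hGM p hp),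
    fun hGF => hsub.isMarkedBasis h𝒥' hF fun η α hα => hG A F hF hGF (η, α) hα⟩⟩
end

section
/- (Möller's syzygy relation) Let t_i, t_j, t_k be terms (monomials) in A[x_1,…,x_n] and let f_i, f_j, f_k ∈ A[x_1,…,x_n]. Writing T(a,b) := lcm(t_a, t_b), T(i,j,k) := lcm(t_i, t_j, t_k), and S(a,b) := (T(a,b)/t_b)·f_b − (T(a,b)/t_a)·f_a, one has the identity (T(i,j,k)/T(i,k))·S(i,k) − (T(i,j,k)/T(i,j))·S(i,j) + (T(i,j,k)/T(k,j))·S(k,j) = 0. -/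
/-!
Multiplying `S(a,b)` by `T(i,j,k)/T(a,b)` gives `(T(i,j,k)/t_b)·f_b − (T(i,j,k)/t_a)·f_a`, since
the exponent differences telescope along `t_a ≤ T(a,b) ≤ T(i,j,k)`; the three binomials obtained
this way cancel in pairs.
-/

open MvPolynomial

variable {n : ℕ}

theorem monomial_tsub_mul_monomial_tsub {σ R : Type*} [CommSemiring R] {T s t : σ →₀ ℕ}
    (hts : t ≤ s) (hsT : s ≤ T) :
    monomial (T - s) (1 : R) * monomial (s - t) 1 = monomial (T - t) 1 := by
  rw [monomial_mul, tsub_add_tsub_cancel hsT hts, one_mul]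

theorem monomial_tsub_mul_monomial_tsub_sub {σ R : Type*} [CommRing R] {T s a b : σ →₀ ℕ}
    (ha : a ≤ s) (hb : b ≤ s) (hsT : s ≤ T) (fa fb : MvPolynomial σ R) :
    monomial (T - s) (1 : R) * (monomial (s - b) 1 * fb - monomial (s - a) 1 * fa) =
      monomial (T - b) 1 * fb - monomial (T - a) 1 * fa := by
  rw [mul_sub, ← mul_assoc, ← mul_assoc, monomial_tsub_mul_monomial_tsub hb hsT,
    monomial_tsub_mul_monomial_tsub ha hsT]

/-- Möller's syzygy relation:
`(T(i,j,k)/T(i,k))·S(i,k) − (T(i,j,k)/T(i,j))·S(i,j) + (T(i,j,k)/T(k,j))·S(k,j) = 0`,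
where `T(a,b) = lcm(t_a,t_b)` (exponentwise sup), quotients of terms are exponentwise
differences, and `S(a,b) = (T(a,b)/t_b)·f_b − (T(a,b)/t_a)·f_a`. -/
theorem stmt14 {n : ℕ} {A : Type} [CommRing A] (ti tj tk : Term n)
    (fi fj fk : MvPolynomial (Fin n) A) :
    MvPolynomial.monomial ((ti ⊔ tj ⊔ tk) - (ti ⊔ tk)) (1 : A) *
        (MvPolynomial.monomial ((ti ⊔ tk) - tk) (1 : A) * fk -
          MvPolynomial.monomial ((ti ⊔ tk) - ti) (1 : A) * fi) -
      MvPolynomial.monomial ((ti ⊔ tj ⊔ tk) - (ti ⊔ tj)) (1 : A) *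
        (MvPolynomial.monomial ((ti ⊔ tj) - tj) (1 : A) * fj -
          MvPolynomial.monomial ((ti ⊔ tj) - ti) (1 : A) * fi) +
      MvPolynomial.monomial ((ti ⊔ tj ⊔ tk) - (tk ⊔ tj)) (1 : A) *
        (MvPolynomial.monomial ((tk ⊔ tj) - tj) (1 : A) * fj -
          MvPolynomial.monomial ((tk ⊔ tj) - tk) (1 : A) * fk) = 0 := by
  have hik : ti ⊔ tk ≤ ti ⊔ tj ⊔ tk := sup_le_sup_right le_sup_left tk
  have hij : ti ⊔ tj ≤ ti ⊔ tj ⊔ tk := le_sup_left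
  have hkj : tk ⊔ tj ≤ ti ⊔ tj ⊔ tk := sup_le le_sup_right (le_sup_right.trans le_sup_left)
  rw [monomial_tsub_mul_monomial_tsub_sub le_sup_left le_sup_right hik,
    monomial_tsub_mul_monomial_tsub_sub le_sup_left le_sup_right hij,
    monomial_tsub_mul_monomial_tsub_sub le_sup_left le_sup_right hkj]
  abel
end

section
/- Let J be a zero-dimensional (Artinian) monomial semigroup ideal in the terms of n variables, i.e. N(J) := 𝒯 \ J is finite, and let B(J) be its border, enumerated as B(J) = {x^{α_1},…,x^{α_s}} in increasing order with respect to the lexicographic term order induced by x_1 < … < x_n. For each i set τ_{α_i} := {x^η ∈ 𝒯 : for all j > i, x^{α_j} does not divide x^{η+α_i}}. Then for every i, τ_{α_i} = 𝒯[μ_{α_i}], where μ_{α_i} is the set of Janet-multiplicative variables of x^{α_i} with respect to B(J) and 𝒯[μ_{α_i}] is the set of terms in the variables of μ_{α_i}; consequently B(J) is a Janet complete system. -/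
open MvPolynomial

variable {n : ℕ}

/-- Lexicographic order induced by `x_1 < … < x_n`: compare the exponent of the largest
variable where the two terms differ. -/
def lexLt {n : ℕ} (a b : Term n) : Prop :=
  ∃ j : Fin n, a j < b j ∧ ∀ i : Fin n, j < i → a i = b i

/-- The border `B(J) = (x_1 N(J) ∪ … ∪ x_n N(J)) \ N(J)` of a semigroup ideal `J`. -/
def border {n : ℕ} (J : Set (Term n)) : Set (Term n) :=
  {β | β ∈ J ∧ ∃ i : Fin n, ∃ γ : Term n, γ ∉ J ∧ β = γ + Finsupp.single i 1}

/-- The Janet-multiplicative variables of `x^α` with respect to a set `B` of terms: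
`x_j` is Janet-multiplicative iff no `x^β ∈ B` has the same exponents as `x^α` on the
variables above `x_j` and a larger exponent on `x_j`. -/
def janetMultVars {n : ℕ} (B : Set (Term n)) (α : Term n) : Set (Fin n) :=
  {j | ¬ ∃ β ∈ B, (∀ i : Fin n, j < i → β i = α i) ∧ α j < β j}

/-!
If `x_i` is not Janet-multiplicative for `x^α ∈ J`, the border contains a lex-larger term
dividing `x_i x^α`: take a divisor-minimal term of `J` that divides `x_i x^α` and agrees with
`x_i x^α` from `x_i` upwards. It lies in the border, because either it can still be lowered in a
variable below `x_i` (and minimality forces the lowered term out of `J`), or it divides the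
border term witnessing non-multiplicativity, and every term of `J` dividing a border term is
itself a border term. Conversely a lex-larger border term dividing `x^{η+α}` exhibits a variable
of `η` that is not multiplicative. For Janet completeness, the decomposition of `x^γ` uses the
lex-largest border term dividing it; two Janet decompositions with distinct border terms
contradict the first part.
-/

theorem isUpperSet_of_add_mem {J : Set (Term n)} (hJ : ∀ γ ∈ J, ∀ η : Term n, γ + η ∈ J) :
    IsUpperSet J := fun a b hab ha => by
  simpa only [add_tsub_cancel_of_le hab] using hJ a ha (b - a)

theorem lexLt_iff_toColex_lt {a b : Term n} : lexLt a b ↔ toColex (⇑a) < toColex (⇑b) :=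
  exists_congr fun _ => and_comm

theorem lexLt_or_lexLt_of_ne {a b : Term n} (h : a ≠ b) : lexLt a b ∨ lexLt b a := by
  simp only [lexLt_iff_toColex_lt]
  exact lt_or_gt_of_ne (toColex_inj.not.2 (DFunLike.coe_injective.ne h))

theorem Set.Finite.exists_forall_not_lexLt {S : Set (Term n)} (hS : S.Finite)
    (hne : S.Nonempty) : ∃ m ∈ S, ∀ b ∈ S, ¬ lexLt m b := by
  obtain ⟨m, hm, hmax⟩ := Set.exists_max_image S (fun a : Term n => toColex (⇑a)) hS hne
  exact ⟨m, hm, fun b hb hlt => (hmax b hb).not_gt (lexLt_iff_toColex_lt.1 hlt)⟩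

section JanetMultiplicative

variable {B : Set (Term n)}

theorem not_le_add_of_lexLt {α η β : Term n}
    (hη : ∀ i : Fin n, η i ≠ 0 → i ∈ janetMultVars B α) (hβ : β ∈ B) (hlt : lexLt α β) :
    ¬ β ≤ η + α := by
  obtain ⟨j, hj, habove⟩ := hlt
  intro hle
  have hβj : β j ≤ η j + α j := hle j
  exact hη j (by omega) ⟨β, hβ, fun i hi => (habove i hi).symm, hj⟩

theorem eq_of_add_eq_of_janetMult {α α' η η' : Term n} (hα : α ∈ B) (hα' : α' ∈ B)
    (hη : ∀ i : Fin n, η i ≠ 0 → i ∈ janetMultVars B α)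
    (hη' : ∀ i : Fin n, η' i ≠ 0 → i ∈ janetMultVars B α') (h : α + η = α' + η') :
    (α, η) = (α', η') := by
  obtain rfl : α = α' := by
    by_contra hne
    rcases lexLt_or_lexLt_of_ne hne with hlt | hlt
    · exact not_le_add_of_lexLt hη hα' hlt (by rw [add_comm, h]; exact le_self_add)
    · exact not_le_add_of_lexLt hη' hα hlt (by rw [add_comm, ← h]; exact le_self_add)
  rw [add_left_cancel h]

end JanetMultiplicative

section Border

variable {J : Set (Term n)}

theorem mem_border_of_sub_single_notMem {δ : Term n} {k : Fin n} (hδ : δ ∈ J) (hk : δ k ≠ 0)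
    (hJ : δ - Finsupp.single k 1 ∉ J) : δ ∈ border J :=
  ⟨hδ, k, _, hJ,
    (tsub_add_cancel_of_le (Finsupp.single_le_iff.2 (Nat.one_le_iff_ne_zero.2 hk))).symm⟩

theorem mem_border_of_le (hJ : IsUpperSet J) {δ β : Term n} (hδ : δ ∈ J) (hβ : β ∈ border J)
    (hδβ : δ ≤ β) : δ ∈ border J := by
  obtain ⟨-, j, γ, hγ, rfl⟩ := hβ
  have hle : δ - Finsupp.single j 1 ≤ γ := tsub_le_iff_right.2 hδβ
  refine mem_border_of_sub_single_notMem hδ ?_ fun h => hγ (hJ hle h)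
  intro hj
  refine hγ (hJ (le_trans (fun k => ?_) hle) hδ)
  rcases eq_or_ne j k with rfl | hjk
  · simp [hj]
  · simp [hjk]

theorem exists_mem_border_lexLt_le_add_single (hJ : IsUpperSet J) {α : Term n} (hα : α ∈ J)
    {i : Fin n} (hi : i ∉ janetMultVars (border J) α) :
    ∃ δ ∈ border J, lexLt α δ ∧ δ ≤ α + Finsupp.single i 1 := by
  obtain ⟨β, hβ, hβα, hαβ⟩ : ∃ β ∈ border J, (∀ k, i < k → β k = α k) ∧ α i < β i := by
    simpa [janetMultVars] using hi
  set S : Set (Term n) := {δ | δ ∈ J ∧ δ ≤ α + Finsupp.single i 1 ∧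
    (∀ k, i < k → δ k = α k) ∧ δ i = α i + 1}
  have hS : S.Finite := (Set.finite_Iic _).subset fun δ hδ => hδ.2.1
  have hαS : α + Finsupp.single i 1 ∈ S :=
    ⟨hJ le_self_add hα, le_rfl, fun k hk => by simp [hk.ne], by simp⟩
  obtain ⟨δ, ⟨hδJ, hδle, hδα, hδi⟩, hδmin⟩ := hS.exists_minimalFor id S ⟨_, hαS⟩
  refine ⟨δ, ?_, ⟨i, by omega, fun k hk => (hδα k hk).symm⟩, hδle⟩
  by_cases hlow : ∃ k < i, δ k ≠ 0
  · obtain ⟨k, hki, hk⟩ := hlow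
    refine mem_border_of_sub_single_notMem hδJ hk fun hkJ => ?_
    have hkS : δ - Finsupp.single k 1 ∈ S := by
      refine ⟨hkJ, tsub_le_self.trans hδle, fun m hm => ?_, ?_⟩
      · simp [(hki.trans hm).ne, hδα m hm]
      · simp [hki.ne, hδi]
    have := hδmin hkS tsub_le_self k
    simp only [id_eq, Finsupp.coe_tsub, Pi.sub_apply, Finsupp.single_eq_same] at this
    omega
  · push Not at hlow
    refine mem_border_of_le hJ hδJ hβ fun k => ?_
    rcases lt_trichotomy k i with hk | rfl | hk
    · simp [hlow k hk]
    · omega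
    · rw [hδα k hk, hβα k hk]

theorem setOf_forall_not_le_eq_janetMult (hJ : IsUpperSet J) {α : Term n} (hα : α ∈ J) :
    {η : Term n | ∀ β ∈ border J, lexLt α β → ¬ β ≤ η + α} =
      {η : Term n | ∀ i : Fin n, η i ≠ 0 → i ∈ janetMultVars (border J) α} := by
  ext η
  refine ⟨fun h i hi => ?_, fun h β hβ hlt => not_le_add_of_lexLt h hβ hlt⟩
  by_contra hmult
  obtain ⟨δ, hδ, hlt, hle⟩ := exists_mem_border_lexLt_le_add_single hJ hα hmult
  refine h δ hδ hlt (hle.trans ?_)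
  rw [add_comm η]
  exact add_le_add_right (Finsupp.single_le_iff.2 (Nat.one_le_iff_ne_zero.2 hi)) α

end Border

theorem stmt19_general {n : ℕ} (J : Set (Term n))
    (hJ : ∀ γ ∈ J, ∀ η : Term n, γ + η ∈ J) :
    (∀ α ∈ border J,
      {η : Term n | ∀ β ∈ border J, lexLt α β → ¬ β ≤ η + α} =
        {η : Term n | ∀ i : Fin n, η i ≠ 0 → i ∈ janetMultVars (border J) α}) ∧
    ∀ γ : Term n, (∃ α ∈ border J, α ≤ γ) →
      ∃! p : Term n × Term n, p.1 ∈ border J ∧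
        (∀ i : Fin n, p.2 i ≠ 0 → i ∈ janetMultVars (border J) p.1) ∧
          γ = p.1 + p.2 := by
  have hτ : ∀ α ∈ border J, _ := fun α hα =>
    setOf_forall_not_le_eq_janetMult (isUpperSet_of_add_mem hJ) hα.1
  refine ⟨hτ, fun γ ⟨α, hα, hαγ⟩ => ?_⟩
  obtain ⟨m, ⟨hm, hmγ⟩, hmax⟩ : ∃ m ∈ {δ | δ ∈ border J ∧ δ ≤ γ}, _ :=
    ((Set.finite_Iic γ).subset fun δ hδ => hδ.2).exists_forall_not_lexLt ⟨α, hα, hαγ⟩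
  have hγ : γ = m + (γ - m) := (add_tsub_cancel_of_le hmγ).symm
  have hmult : γ - m ∈ {η | ∀ i : Fin n, η i ≠ 0 → i ∈ janetMultVars (border J) m} := by
    rw [← hτ m hm]
    intro β hβ hlt hle
    exact hmax β ⟨hβ, by rwa [add_comm, ← hγ] at hle⟩ hlt
  refine ⟨(m, γ - m), ⟨hm, hmult, hγ⟩, ?_⟩
  rintro ⟨α', η'⟩ ⟨hα', hη', rfl⟩
  exact eq_of_add_eq_of_janetMult hα' hm hη' hmult hγ

/-- for a zero-dimensional monomial semigroup ideal `J`, enumerating the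
border `B(J)` increasingly w.r.t. lex and letting
`τ_α = {x^η : no lex-larger element of B(J) divides x^{η+α}}`, each `τ_α` is the set of
terms in the Janet-multiplicative variables of `x^α` w.r.t. `B(J)`; consequently `B(J)`
is a Janet complete system. -/
theorem stmt19 {n : ℕ} (J : Set (Term n))
    (hJ : ∀ γ ∈ J, ∀ η : Term n, γ + η ∈ J)
    (hfin : (Jᶜ : Set (Term n)).Finite) :
    (∀ α ∈ border J,
      {η : Term n | ∀ β ∈ border J, lexLt α β → ¬ β ≤ η + α} =
        {η : Term n | ∀ i : Fin n, η i ≠ 0 → i ∈ janetMultVars (border J) α}) ∧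
    ∀ γ : Term n, (∃ α ∈ border J, α ≤ γ) →
      ∃! p : Term n × Term n, p.1 ∈ border J ∧
        (∀ i : Fin n, p.2 i ≠ 0 → i ∈ janetMultVars (border J) p.1) ∧
          γ = p.1 + p.2 :=
  stmt19_general J hJ
end
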